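/- arXiv:1511.01153 — 3 statements merged into one kernel-verified Lean document; each statement's English description precedes it below -/
import Mathlib

section
/- Let (E, ‖·‖) be a complete L^∞-normed module with L^0-extension E_0. Then every x ∈ E_0 can be written as x = ξ * y for some ξ ∈ L^0 and y ∈ E; that is, E_0 = L^0 * E. -/
open MeasureTheory Filter
noncomputable section

variable {Ω : Type} [MeasurableSpace Ω] {μ : Measure Ω}

/-- `L⁰(𝓕)`: equivalence classes of random variables, as a commutative ring. -/
instance : NatCast (Ω →ₘ[μ] ℝ) := ⟨fun n => AEEqFun.const Ω (n : ℝ)⟩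
instance : IntCast (Ω →ₘ[μ] ℝ) := ⟨fun n => AEEqFun.const Ω (n : ℝ)⟩
instance : CommRing (Ω →ₘ[μ] ℝ) :=
  AEEqFun.toGerm_injective.commRing AEEqFun.toGerm AEEqFun.zero_toGerm AEEqFun.one_toGerm
    AEEqFun.add_toGerm AEEqFun.mul_toGerm AEEqFun.neg_toGerm AEEqFun.sub_toGerm
    (fun _ _ => AEEqFun.smul_toGerm _ _) (fun _ _ => AEEqFun.smul_toGerm _ _)
    AEEqFun.pow_toGerm (fun _ => rfl) (fun _ => rfl)

/-- `L^∞(𝓕)`: the subring of essentially bounded random variables. -/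
def Linf (μ : Measure Ω) : Subring (Ω →ₘ[μ] ℝ) where
  carrier := {ξ | ∃ c : ℝ, ∀ᵐ ω ∂μ, |ξ ω| ≤ c}
  zero_mem' := ⟨0, by filter_upwards [AEEqFun.coeFn_zero (β := ℝ) (μ := μ)] with ω h; simp [h]⟩
  one_mem' := ⟨1, by filter_upwards [AEEqFun.coeFn_one (β := ℝ) (μ := μ)] with ω h; simp [h]⟩
  add_mem' := by
    rintro a b ⟨c, hc⟩ ⟨d, hd⟩
    exact ⟨c + d, by
      filter_upwards [AEEqFun.coeFn_add a b, hc, hd] with ω h1 h2 h3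
      calc |(a + b) ω| = |a ω + b ω| := by rw [h1]; rfl
        _ ≤ |a ω| + |b ω| := abs_add_le _ _
        _ ≤ c + d := add_le_add h2 h3⟩
  mul_mem' := by
    rintro a b ⟨c, hc⟩ ⟨d, hd⟩
    exact ⟨|c| * |d|, by
      filter_upwards [AEEqFun.coeFn_mul a b, hc, hd] with ω h1 h2 h3
      calc |(a * b) ω| = |a ω * b ω| := by rw [h1]; rfl
        _ = |a ω| * |b ω| := abs_mul _ _
        _ ≤ |c| * |d| :=
            mul_le_mul (h2.trans (le_abs_self c)) (h3.trans (le_abs_self d))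
              (abs_nonneg _) (abs_nonneg _)⟩
  neg_mem' := by
    rintro a ⟨c, hc⟩
    exact ⟨c, by
      filter_upwards [AEEqFun.coeFn_neg a, hc] with ω h1 h2
      calc |(-a) ω| = |-(a ω)| := by rw [h1]; rfl
        _ = |a ω| := abs_neg _
        _ ≤ c := h2⟩

/-- the constant `c`, as an element of `L^∞`. -/
def LinfConst (μ : Measure Ω) (c : ℝ) : Linf μ :=
  ⟨AEEqFun.const Ω c, |c|, by
    filter_upwards [AEEqFun.coeFn_const (α := Ω) (μ := μ) c] with ω h
    simp [h, Function.const]⟩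

/-- the equivalence class `Ĩ_A` of the indicator function of a set `A`. -/
def indL0 (μ : Measure Ω) (A : Set Ω) (hA : MeasurableSet A) : Ω →ₘ[μ] ℝ :=
  AEEqFun.mk (A.indicator (1 : Ω → ℝ)) ((measurable_const.indicator hA).aestronglyMeasurable)

/-- a countable measurable partition of `Ω`. -/
structure MPartition (Ω : Type) [MeasurableSpace Ω] where
  A : ℕ → Set Ω
  meas : ∀ k, MeasurableSet (A k)
  disj : ∀ m k, m ≠ k → A m ∩ A k = ∅
  cover : (⋃ k, A k) = Set.univ

/-- `Ĩ_{A_k}` for a member of a countable measurable partition. -/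
def MPartition.ind (P : MPartition Ω) (μ : Measure Ω) (k : ℕ) : Ω →ₘ[μ] ℝ :=
  indL0 μ (P.A k) (P.meas k)

/-- `‖·‖` is an `L⁰`-norm making the `L⁰`-module `S` a random normed module. -/
structure IsRNNorm (μ : Measure Ω) {S : Type} [AddCommGroup S]
    [Module (Ω →ₘ[μ] ℝ) S] (n : S → Ω →ₘ[μ] ℝ) : Prop where
  nonneg : ∀ x, 0 ≤ n x
  eq_zero_iff : ∀ x, n x = 0 ↔ x = 0
  norm_smul : ∀ (ξ : Ω →ₘ[μ] ℝ) (x : S), n (ξ • x) = |ξ| * n x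
  norm_add_le : ∀ x y, n (x + y) ≤ n x + n y

/-- `‖·‖` is an `L^∞`-norm making the `L^∞`-module `E` an `L^∞`-normed module. -/
structure IsLinfNorm (μ : Measure Ω) {E : Type} [AddCommGroup E]
    [Module (Linf μ) E] (n : E → Ω →ₘ[μ] ℝ) : Prop where
  nonneg : ∀ x, 0 ≤ n x
  mem_Linf : ∀ x, n x ∈ Linf μ
  eq_zero_iff : ∀ x, n x = 0 ↔ x = 0
  norm_smul : ∀ (ξ : Linf μ) (x : E), n (ξ • x) = |(ξ : Ω →ₘ[μ] ℝ)| * n x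
  norm_add_le : ∀ x y, n (x + y) ≤ n x + n y

/-- the metric `d(x,y) = E[1 ∧ ‖x-y‖]` associated to an `L⁰`- (or `L^∞`-) norm. -/
def ndist {S : Type} [AddCommGroup S] (μ : Measure Ω) (n : S → Ω →ₘ[μ] ℝ) (x y : S) : ℝ :=
  ∫ ω, min 1 |n (x - y) ω| ∂μ

/-- the distance of convergence in probability on `L⁰`. -/
def dProb (μ : Measure Ω) (ξ η : Ω →ₘ[μ] ℝ) : ℝ := ∫ ω, min 1 |ξ ω - η ω| ∂μ

/-- Cauchy property of a sequence with respect to a distance function. -/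
def dCauchy {S : Type} (d : S → S → ℝ) (x : ℕ → S) : Prop :=
  ∀ ε > (0:ℝ), ∃ N : ℕ, ∀ m ≥ N, ∀ k ≥ N, d (x m) (x k) < ε

/-- convergence of a sequence with respect to a distance function. -/
def dTendsto {S : Type} (d : S → S → ℝ) (x : ℕ → S) (y : S) : Prop :=
  Tendsto (fun k => d (x k) y) atTop (nhds 0)

/-- completeness with respect to a distance function. -/
def dComplete {S : Type} (d : S → S → ℝ) : Prop :=
  ∀ x : ℕ → S, dCauchy d x → ∃ y, dTendsto d x y

/-- a bundled complete-or-not random normed module over `L⁰(𝓕)`. -/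
structure RNMod (Ω : Type) [MeasurableSpace Ω] (μ : Measure Ω) where
  carrier : Type
  acg : AddCommGroup carrier
  mod : @Module (Ω →ₘ[μ] ℝ) carrier _ acg.toAddCommMonoid
  rnorm : carrier → Ω →ₘ[μ] ℝ
  isRNNorm : IsRNNorm μ rnorm

attribute [instance] RNMod.acg RNMod.mod

/-- the metric of the `(ε,λ)`-topology of a random normed module. -/
def RNMod.dist (S : RNMod Ω μ) : S.carrier → S.carrier → ℝ := ndist μ S.rnorm

/-- completeness of a random normed module in the `(ε,λ)`-topology. -/
def RNMod.Complete (S : RNMod Ω μ) : Prop := dComplete S.dist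

/-- the essential supremum `‖ξ‖_∞` of (the absolute value of) a random variable. -/
def NinfV (μ : Measure Ω) (ξ : Ω →ₘ[μ] ℝ) : ℝ := essSup (fun ω => |ξ ω|) μ

/-- `T` is an `L^∞`-module homomorphism from `E` into (the `L^∞`-module underlying) `S`. -/
def IsLinfModHom (μ : Measure Ω) {E S : Type} [AddCommGroup E] [Module (Linf μ) E]
    [AddCommGroup S] [Module (Ω →ₘ[μ] ℝ) S] (T : E → S) : Prop :=
  (∀ x y, T (x + y) = T x + T y) ∧
  (∀ (ξ : Linf μ) (x : E), T (ξ • x) = ((ξ : Ω →ₘ[μ] ℝ)) • T x)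

/-- `S` together with `T` is an `L⁰`-extension of the `L^∞`-normed module `(E, n)`:
`S` is a complete random normed module, `T` is a norm-preserving `L^∞`-module
homomorphism with dense range. -/
def IsL0Extension (μ : Measure Ω) {E : Type} [AddCommGroup E] [Module (Linf μ) E]
    (n : E → Ω →ₘ[μ] ℝ) (S : RNMod Ω μ) (T : E → S.carrier) : Prop :=
  S.Complete ∧ IsLinfModHom μ T ∧ (∀ x, S.rnorm (T x) = n x) ∧
  (∀ y : S.carrier, ∀ ε > (0:ℝ), ∃ x : E, S.dist (T x) y < ε)

/-- the set of elements of an `L⁰`-normed module with essentially bounded norm. -/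
def LinfPart (μ : Measure Ω) {S : Type} (n : S → Ω →ₘ[μ] ℝ) : Set S := {x | n x ∈ Linf μ}

/-- convergence in probability of a sequence of random variables. -/
def TendstoInProb (μ : Measure Ω) (ξ : ℕ → Ω →ₘ[μ] ℝ) (l : Ω →ₘ[μ] ℝ) : Prop :=
  Tendsto (fun k => dProb μ (ξ k) l) atTop (nhds 0)

/-- the countable concatenation hull `H⁰_cc(E)` of a subset `E` of a random normed module. -/
def Hcc (S : RNMod Ω μ) (E : Set S.carrier) : Set S.carrier :=
  {z | ∃ (x : ℕ → S.carrier) (P : MPartition Ω),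
    (∀ k, x k ∈ E) ∧ ∀ k, P.ind μ k • z = P.ind μ k • x k}

/-- `L(E) = L⁰ * E`, the set of `L⁰`-multiples of elements of `E`. -/
def Lgen (S : RNMod Ω μ) (E : Set S.carrier) : Set S.carrier :=
  {z | ∃ (ξ : Ω →ₘ[μ] ℝ) (x : S.carrier), x ∈ E ∧ z = ξ • x}

/-- `f` is a continuous `L^∞`-module homomorphism from `(E, n)` to `L^∞`, i.e. a member of
the dual `L^∞`-normed module `E′`. -/
def IsLinfDual (μ : Measure Ω) {E : Type} [AddCommGroup E] [Module (Linf μ) E]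
    (n : E → Ω →ₘ[μ] ℝ) (f : E → Ω →ₘ[μ] ℝ) : Prop :=
  (∀ x, f x ∈ Linf μ) ∧ (∀ x y, f (x + y) = f x + f y) ∧
  (∀ (ξ : Linf μ) (x : E), f (ξ • x) = (ξ : Ω →ₘ[μ] ℝ) * f x) ∧
  (∀ ε > (0:ℝ), ∃ δ > (0:ℝ), ∀ x, NinfV μ (n x) < δ → NinfV μ (f x) < ε)

/-- `g` is a continuous `L⁰`-module homomorphism from `S` to `L⁰`, i.e. a member of the
random conjugate space `S^*`. -/
def IsRNDual (μ : Measure Ω) (S : RNMod Ω μ) (g : S.carrier → Ω →ₘ[μ] ℝ) : Prop :=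
  (∀ x y, g (x + y) = g x + g y) ∧ (∀ (ξ : Ω →ₘ[μ] ℝ) x, g (ξ • x) = ξ * g x) ∧
  (∀ ε > (0:ℝ), ∃ δ > (0:ℝ), ∀ x, ndist μ S.rnorm x 0 < δ → dProb μ (g x) 0 < ε)

/-- the set `{|f(x)| : ‖x‖ ≤ 1}` whose supremum in the lattice `L⁰` is the dual norm `‖f‖′`. -/
def dualBall {X : Type} (n : X → Ω →ₘ[μ] ℝ) (f : X → Ω →ₘ[μ] ℝ) : Set (Ω →ₘ[μ] ℝ) :=
  {t | ∃ x, n x ≤ 1 ∧ t = |f x|}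

/-!
Choose `xₘ ∈ E` with `T xₘ → z` in probability fast enough that, by Markov's inequality and
Borel–Cantelli, almost every `ω` has `‖T xₘ - z‖(ω) < 2⁻ᵐ` for all large `m`. This gives a
countable measurable partition `(B_j)` of almost all of `Ω` such that `T xₘ → z` uniformly on
each `B_j`; as `T` is isometric and `E` is complete, `Ĩ_{B_j} • z = T u_j` for some `u_j ∈ E`.
The `u_j` cannot be glued in `E` itself, whose norm is the essential supremum, but after
rescaling by constants `c_j > 0` with `‖c_j u_j‖_∞ ≤ 2⁻ʲ` the series `Y = ∑ c_j u_j` converges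
in `E`, and `z = ξ • T Y` for `ξ = ∑ c_j⁻¹ Ĩ_{B_j} ∈ L⁰`.
-/

namespace MeasureTheory.AEEqFun

lemma abs_neg_one : |(-1 : Ω →ₘ[μ] ℝ)| = 1 := by
  rw [abs_neg]
  apply ext
  filter_upwards [coeFn_abs (1 : Ω →ₘ[μ] ℝ), coeFn_one (β := ℝ) (μ := μ)]
    with ω h_abs h_one
  simp [h_abs, h_one]

lemma const_mul_const (a b : ℝ) :
    (const Ω a * const Ω b : Ω →ₘ[μ] ℝ) = const Ω (a * b) := by
  apply ext
  filter_upwards [coeFn_mul (const Ω a) (const Ω b : Ω →ₘ[μ] ℝ),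
    coeFn_const (μ := μ) Ω a, coeFn_const (μ := μ) Ω b,
    coeFn_const (μ := μ) Ω (a * b)] with ω h h_a h_b h_ab
  simp [h, h_a, h_b, h_ab]

lemma const_one : (const Ω 1 : Ω →ₘ[μ] ℝ) = 1 := rfl

end MeasureTheory.AEEqFun

lemma NinfV_le_of_ae_abs_le [NeZero μ] {f : Ω →ₘ[μ] ℝ} {c : ℝ} (h : ∀ᵐ ω ∂μ, |f ω| ≤ c) :
    NinfV μ f ≤ c :=
  essSup_le_of_ae_le c h
    (isBoundedUnder_of_eventually_ge (ae_of_all _ fun ω => abs_nonneg (f ω))).isCoboundedUnder_le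

lemma ae_abs_le_NinfV {f : Ω →ₘ[μ] ℝ} (hf : f ∈ Linf μ) : ∀ᵐ ω ∂μ, |f ω| ≤ NinfV μ f := by
  obtain ⟨c, hc⟩ := hf
  exact ae_le_essSup ⟨c, eventually_map.2 hc⟩

lemma coe_LinfConst (c : ℝ) : (LinfConst μ c : Ω →ₘ[μ] ℝ) = AEEqFun.const Ω c := rfl

lemma coeFn_indL0 (A : Set Ω) (hA : MeasurableSet A) :
    ⇑(indL0 μ A hA) =ᵐ[μ] A.indicator 1 :=
  AEEqFun.coeFn_mk _ _

def indLinf (μ : Measure Ω) (A : Set Ω) (hA : MeasurableSet A) : Linf μ :=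
  ⟨indL0 μ A hA, 1, by
    filter_upwards [coeFn_indL0 (μ := μ) A hA] with ω h
    by_cases hω : ω ∈ A <;> simp [h, hω]⟩

lemma coe_indLinf (A : Set Ω) (hA : MeasurableSet A) :
    (indLinf μ A hA : Ω →ₘ[μ] ℝ) = indL0 μ A hA := rfl

lemma indL0_mul_self (A : Set Ω) (hA : MeasurableSet A) :
    indL0 μ A hA * indL0 μ A hA = indL0 μ A hA := by
  apply AEEqFun.ext
  filter_upwards [AEEqFun.coeFn_mul (indL0 μ A hA) (indL0 μ A hA), coeFn_indL0 A hA] with ω h h_A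
  by_cases hω : ω ∈ A <;> simp [h, h_A, hω]

lemma indL0_mul_of_disjoint {A B : Set Ω} (hA : MeasurableSet A) (hB : MeasurableSet B)
    (hAB : Disjoint A B) : indL0 μ A hA * indL0 μ B hB = 0 := by
  apply AEEqFun.ext
  filter_upwards [AEEqFun.coeFn_mul (indL0 μ A hA) (indL0 μ B hB), coeFn_indL0 A hA,
    coeFn_indL0 B hB, AEEqFun.coeFn_zero (β := ℝ) (μ := μ)] with ω h h_A h_B h_0
  by_cases hω : ω ∈ A
  · simp [h, h_A, h_B, h_0, hω, hAB.notMem_of_mem_left hω]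
  · simp [h, h_A, h_0, hω]

namespace RNMod

variable (S : RNMod Ω μ)

lemma ae_rnorm_nonneg (v : S.carrier) : ∀ᵐ ω ∂μ, 0 ≤ S.rnorm v ω := by
  filter_upwards [AEEqFun.coeFn_le.2 (S.isRNNorm.nonneg v),
    AEEqFun.coeFn_zero (β := ℝ) (μ := μ)] with ω h h_0
  rwa [h_0] at h

lemma rnorm_neg (v : S.carrier) : S.rnorm (-v) = S.rnorm v := by
  rw [← neg_one_smul (Ω →ₘ[μ] ℝ) v, S.isRNNorm.norm_smul, AEEqFun.abs_neg_one, one_mul]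

lemma rnorm_sub_comm (v w : S.carrier) : S.rnorm (v - w) = S.rnorm (w - v) := by
  rw [← rnorm_neg, neg_sub]

lemma ae_rnorm_sub_le (u v w : S.carrier) :
    ∀ᵐ ω ∂μ, S.rnorm (u - w) ω ≤ S.rnorm (u - v) ω + S.rnorm (v - w) ω := by
  have h := S.isRNNorm.norm_add_le (u - v) (v - w)
  rw [sub_add_sub_cancel] at h
  filter_upwards [AEEqFun.coeFn_le.2 h, AEEqFun.coeFn_add (S.rnorm (u - v)) (S.rnorm (v - w))]
    with ω h_le h_add
  rwa [h_add] at h_le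

lemma rnorm_smul_ae_eq (ξ : Ω →ₘ[μ] ℝ) (v : S.carrier) :
    S.rnorm (ξ • v) =ᵐ[μ] fun ω => |ξ ω| * S.rnorm v ω := by
  rw [S.isRNNorm.norm_smul]
  filter_upwards [AEEqFun.coeFn_mul |ξ| (S.rnorm v), AEEqFun.coeFn_abs ξ] with ω h_mul h_abs
  rw [h_mul, Pi.mul_apply, h_abs]

lemma rnorm_indL0_smul_ae_eq (A : Set Ω) (hA : MeasurableSet A) (v : S.carrier) :
    S.rnorm (indL0 μ A hA • v) =ᵐ[μ] A.indicator (S.rnorm v) := by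
  filter_upwards [S.rnorm_smul_ae_eq (indL0 μ A hA) v, coeFn_indL0 A hA] with ω h h_A
  by_cases hω : ω ∈ A <;> simp [h, h_A, hω]

lemma eq_of_ae_rnorm_sub_le_zero {v w : S.carrier} (h : ∀ᵐ ω ∂μ, S.rnorm (v - w) ω ≤ 0) :
    v = w := by
  refine sub_eq_zero.1 ((S.isRNNorm.eq_zero_iff _).1 (AEEqFun.ext ?_))
  filter_upwards [h, S.ae_rnorm_nonneg (v - w), AEEqFun.coeFn_zero (β := ℝ) (μ := μ)]
    with ω h_le h_nonneg h_0
  rw [h_0]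
  exact le_antisymm h_le h_nonneg

lemma eq_of_tendsto_ae_rnorm_sub_le {v w : S.carrier} {ε : ℕ → ℝ}
    (hε : Tendsto ε atTop (nhds 0))
    (h : ∀ᶠ K in atTop, ∀ᵐ ω ∂μ, S.rnorm (v - w) ω ≤ ε K) : v = w := by
  obtain ⟨K₀, hK₀⟩ := eventually_atTop.1 h
  refine S.eq_of_ae_rnorm_sub_le_zero ?_
  filter_upwards [ae_all_iff.2 fun K => hK₀ (K + K₀) le_add_self] with ω h_le
  exact ge_of_tendsto' (hε.comp (tendsto_add_atTop_nat K₀)) h_le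

lemma eq_of_forall_indL0_smul_eq {B : ℕ → Set Ω} (hB : ∀ j, MeasurableSet (B j))
    (hcover : ∀ᵐ ω ∂μ, ∃ j, ω ∈ B j) {v w : S.carrier}
    (h : ∀ j, indL0 μ (B j) (hB j) • v = indL0 μ (B j) (hB j) • w) : v = w := by
  have h_piece : ∀ j, ∀ᵐ ω ∂μ, ω ∈ B j → S.rnorm (v - w) ω ≤ 0 := by
    intro j
    filter_upwards [S.rnorm_indL0_smul_ae_eq (B j) (hB j) (v - w),
      AEEqFun.coeFn_zero (β := ℝ) (μ := μ)] with ω h_ind h_0 hω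
    rw [smul_sub, h j, sub_self, (S.isRNNorm.eq_zero_iff 0).2 rfl, h_0,
      Set.indicator_of_mem hω] at h_ind
    exact h_ind.symm.le
  refine S.eq_of_ae_rnorm_sub_le_zero ?_
  filter_upwards [ae_all_iff.2 h_piece, hcover] with ω h_all ⟨j, hj⟩
  exact h_all j hj

end RNMod

lemma dCauchy_of_le_add {X : Type} {d : X → X → ℝ} {s : ℕ → X} {r : ℕ → ℝ}
    (hr : Tendsto r atTop (nhds 0)) (k : ℕ)
    (h : ∀ i ≥ k, ∀ j ≥ k, d (s i) (s j) ≤ r i + r j) : dCauchy d s := by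
  intro ε hε
  obtain ⟨N, hN⟩ := eventually_atTop.1 (hr.eventually (gt_mem_nhds (half_pos hε)))
  refine ⟨max k N, fun i hi j hj => ?_⟩
  linarith [h i (le_of_max_le_left hi) j (le_of_max_le_left hj),
    hN i (le_of_max_le_right hi), hN j (le_of_max_le_right hj)]

section LinfNormed

variable {E : Type} [AddCommGroup E] [Module (Linf μ) E] {n : E → Ω →ₘ[μ] ℝ}

namespace IsLinfNorm

lemma ae_nonneg (hn : IsLinfNorm μ n) (x : E) : ∀ᵐ ω ∂μ, 0 ≤ n x ω := by
  filter_upwards [AEEqFun.coeFn_le.2 (hn.nonneg x), AEEqFun.coeFn_zero (β := ℝ) (μ := μ)]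
    with ω h h_0
  rwa [h_0] at h

lemma ae_le_NinfV (hn : IsLinfNorm μ n) (x : E) : ∀ᵐ ω ∂μ, n x ω ≤ NinfV μ (n x) :=
  (ae_abs_le_NinfV (hn.mem_Linf x)).mono fun _ h => (le_abs_self _).trans h

lemma map_neg (hn : IsLinfNorm μ n) (x : E) : n (-x) = n x := by
  rw [← neg_one_smul (Linf μ) x, hn.norm_smul, NegMemClass.coe_neg, OneMemClass.coe_one,
    AEEqFun.abs_neg_one, one_mul]

lemma map_sub_comm (hn : IsLinfNorm μ n) (x y : E) : n (x - y) = n (y - x) := by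
  rw [← hn.map_neg, neg_sub]

lemma NinfV_add_le [NeZero μ] (hn : IsLinfNorm μ n) (x y : E) :
    NinfV μ (n (x + y)) ≤ NinfV μ (n x) + NinfV μ (n y) := by
  refine NinfV_le_of_ae_abs_le ?_
  filter_upwards [AEEqFun.coeFn_le.2 (hn.norm_add_le x y), AEEqFun.coeFn_add (n x) (n y),
    hn.ae_nonneg (x + y), hn.ae_le_NinfV x, hn.ae_le_NinfV y] with ω h_le h_add h_nn h_x h_y
  rw [h_add, Pi.add_apply] at h_le
  rw [abs_of_nonneg h_nn]
  linarith

lemma NinfV_sum_le [NeZero μ] (hn : IsLinfNorm μ n) (s : Finset ℕ) (v : ℕ → E) :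
    NinfV μ (n (∑ j ∈ s, v j)) ≤ ∑ j ∈ s, NinfV μ (n (v j)) := by
  refine Finset.le_sum_of_subadditive (fun x => NinfV μ (n x)) ?_ hn.NinfV_add_le s v
  refine NinfV_le_of_ae_abs_le ?_
  filter_upwards [AEEqFun.coeFn_zero (β := ℝ) (μ := μ)] with ω h_0
  simp [(hn.eq_zero_iff 0).2 rfl, h_0]

lemma exists_pos_NinfV_LinfConst_smul_le [NeZero μ] (hn : IsLinfNorm μ n) (x : E) {ε : ℝ}
    (hε : 0 < ε) : ∃ c > 0, NinfV μ (n (LinfConst μ c • x)) ≤ ε := by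
  set M := NinfV μ (n x)
  have hM : 0 < |M| + 1 := by positivity
  refine ⟨ε / (|M| + 1), by positivity, NinfV_le_of_ae_abs_le ?_⟩
  rw [hn.norm_smul, coe_LinfConst]
  filter_upwards [AEEqFun.coeFn_mul |AEEqFun.const Ω (ε / (|M| + 1))| (n x),
    AEEqFun.coeFn_abs (AEEqFun.const Ω (ε / (|M| + 1)) : Ω →ₘ[μ] ℝ),
    AEEqFun.coeFn_const (μ := μ) Ω (ε / (|M| + 1)), ae_abs_le_NinfV (hn.mem_Linf x)]
    with ω h_mul h_abs h_const h_x
  rw [h_mul, Pi.mul_apply, h_abs, h_const, Function.const_apply, abs_mul, abs_abs,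
    abs_of_pos (by positivity : 0 < ε / (|M| + 1))]
  calc ε / (|M| + 1) * |n x ω| ≤ ε / (|M| + 1) * (|M| + 1) := by
        gcongr
        linarith [le_abs_self M]
    _ = ε := div_mul_cancel₀ ε hM.ne'

end IsLinfNorm

namespace IsLinfModHom

variable {X : Type} [AddCommGroup X] [Module (Ω →ₘ[μ] ℝ) X] {T : E → X}

def toAddMonoidHom (hT : IsLinfModHom μ T) : E →+ X := AddMonoidHom.mk' T hT.1

lemma map_sub (hT : IsLinfModHom μ T) (x y : E) : T (x - y) = T x - T y :=
  _root_.map_sub hT.toAddMonoidHom x y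

lemma map_sum (hT : IsLinfModHom μ T) (s : Finset ℕ) (v : ℕ → E) :
    T (∑ j ∈ s, v j) = ∑ j ∈ s, T (v j) :=
  _root_.map_sum hT.toAddMonoidHom v s

end IsLinfModHom

end LinfNormed

lemma measure_le_abs_le_ofReal_of_integral_min_one_le [IsFiniteMeasure μ] (f : Ω →ₘ[μ] ℝ)
    {r : ℝ} (hr0 : 0 < r) (hr1 : r ≤ 1) (h : ∫ ω, min 1 |f ω| ∂μ ≤ r ^ 2) :
    μ {ω | r ≤ |f ω|} ≤ ENNReal.ofReal r := by
  have h_int : Integrable (fun ω => min 1 |f ω|) μ :=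
    (integrable_const (1 : ℝ)).mono' (measurable_const.min f.measurable.abs).aestronglyMeasurable
      (ae_of_all _ fun ω => by simp [abs_of_nonneg (le_min zero_le_one (abs_nonneg (f ω)))])
  have h_set : {ω | r ≤ |f ω|} = {ω | r ≤ min 1 |f ω|} := by
    ext ω
    simp [hr1]
  have h_markov := mul_meas_ge_le_integral_of_nonneg (ae_of_all _ fun ω => by positivity) h_int r
  rw [← h_set] at h_markov
  rw [← ENNReal.ofReal_toReal (measure_ne_top μ _)]
  exact ENNReal.ofReal_le_ofReal (show μ.real _ ≤ r by nlinarith)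

lemma ae_eventually_abs_lt_of_integral_min_one_le [IsFiniteMeasure μ] (f : ℕ → Ω →ₘ[μ] ℝ)
    {r : ℕ → ℝ} (hr0 : ∀ m, 0 < r m) (hr1 : ∀ m, r m ≤ 1) (hr : Summable r)
    (h : ∀ m, ∫ ω, min 1 |f m ω| ∂μ ≤ r m ^ 2) :
    ∀ᵐ ω ∂μ, ∀ᶠ m in atTop, |f m ω| < r m := by
  have h_sum : ∑' m, μ {ω | r m ≤ |f m ω|} ≠ ⊤ := by
    refine ne_top_of_le_ne_top ?_ (ENNReal.tsum_le_tsum fun m =>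
      measure_le_abs_le_ofReal_of_integral_min_one_le (f m) (hr0 m) (hr1 m) (h m))
    rw [← ENNReal.ofReal_tsum_of_nonneg (fun m => (hr0 m).le) hr]
    exact ENNReal.ofReal_ne_top
  filter_upwards [ae_eventually_notMem h_sum] with ω hω
  simpa using hω

lemma exists_disjoint_cover_of_ae_eventually {P : ℕ → Ω → Prop}
    (hP : ∀ m, MeasurableSet {ω | P m ω}) (h : ∀ᵐ ω ∂μ, ∀ᶠ m in atTop, P m ω) :
    ∃ B : ℕ → Set Ω, (∀ j, MeasurableSet (B j)) ∧ (Pairwise fun i j => Disjoint (B i) (B j)) ∧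
      (∀ᵐ ω ∂μ, ∃ j, ω ∈ B j) ∧ ∀ j, ∀ ω ∈ B j, ∀ m ≥ j, P m ω := by
  set A : ℕ → Set Ω := fun k => ⋂ m ≥ k, {ω | P m ω}
  refine ⟨disjointed A, MeasurableSet.disjointed fun k =>
      MeasurableSet.biInter (Set.to_countable _) fun m _ => hP m,
    disjoint_disjointed A, ?_, fun j ω hω => Set.mem_iInter₂.1 (disjointed_subset A j hω)⟩
  filter_upwards [h] with ω hω
  obtain ⟨k, hk⟩ := eventually_atTop.1 hω
  have h_mem : ω ∈ ⋃ k, A k := Set.mem_iUnion.2 ⟨k, Set.mem_iInter₂.2 hk⟩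
  rwa [← iUnion_disjointed, Set.mem_iUnion] at h_mem

def piecewiseConstL0 (μ : Measure Ω) (B : ℕ → Set Ω) (hB : ∀ j, MeasurableSet (B j))
    (a : ℕ → ℝ) : Ω →ₘ[μ] ℝ :=
  AEEqFun.mk (fun ω => ∑' j, (B j).indicator (fun _ => a j) ω)
    (Measurable.tsum fun j => measurable_const.indicator (hB j)).aestronglyMeasurable

lemma coeFn_piecewiseConstL0 {B : ℕ → Set Ω} (hB : ∀ j, MeasurableSet (B j)) (a : ℕ → ℝ) :
    ⇑(piecewiseConstL0 μ B hB a) =ᵐ[μ] fun ω => ∑' j, (B j).indicator (fun _ => a j) ω :=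
  AEEqFun.coeFn_mk _ _

lemma indL0_mul_piecewiseConstL0 {B : ℕ → Set Ω} (hB : ∀ j, MeasurableSet (B j))
    (hdisj : Pairwise fun i j => Disjoint (B i) (B j)) (a : ℕ → ℝ) (j : ℕ) :
    indL0 μ (B j) (hB j) * piecewiseConstL0 μ B hB a =
      AEEqFun.const Ω (a j) * indL0 μ (B j) (hB j) := by
  apply AEEqFun.ext
  filter_upwards [AEEqFun.coeFn_mul (indL0 μ (B j) (hB j)) (piecewiseConstL0 μ B hB a),
    AEEqFun.coeFn_mul (AEEqFun.const Ω (a j)) (indL0 μ (B j) (hB j)), coeFn_indL0 (B j) (hB j),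
    coeFn_piecewiseConstL0 hB a, AEEqFun.coeFn_const (μ := μ) Ω (a j)] with ω h_l h_r h_B h_a h_c
  rw [h_l, h_r, Pi.mul_apply, Pi.mul_apply, h_B, h_c, h_a]
  by_cases hω : ω ∈ B j
  · rw [tsum_eq_single j fun i hij => Set.indicator_of_notMem
      ((hdisj hij).symm.notMem_of_mem_left hω) _]
    simp [hω, mul_comm]
  · simp [hω]

section Extension

variable {E : Type} [AddCommGroup E] [Module (Linf μ) E] {n : E → Ω →ₘ[μ] ℝ}
  {S : RNMod Ω μ} {T : E → S.carrier}

lemma mem_range_of_tendsto_uniformly [NeZero μ] (hn : IsLinfNorm μ n)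
    (hcomp : dComplete (fun x y : E => NinfV μ (n (x - y)))) (hT : IsLinfModHom μ T)
    (hiso : ∀ x, S.rnorm (T x) = n x) {z : S.carrier} {x : ℕ → E} {r : ℕ → ℝ}
    (hr : Tendsto r atTop (nhds 0))
    (h : ∀ᶠ j in atTop, ∀ᵐ ω ∂μ, S.rnorm (T (x j) - z) ω ≤ r j) : z ∈ Set.range T := by
  obtain ⟨k, hk⟩ := eventually_atTop.1 h
  have h_cauchy : dCauchy (fun a b => NinfV μ (n (a - b))) x := by
    refine dCauchy_of_le_add hr k fun i hi j hj => NinfV_le_of_ae_abs_le ?_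
    filter_upwards [S.ae_rnorm_sub_le (T (x i)) z (T (x j)), hk i hi, hk j hj,
      hn.ae_nonneg (x i - x j)] with ω h_tri h_i h_j h_nn
    rw [S.rnorm_sub_comm z, ← hT.map_sub, hiso] at h_tri
    rw [abs_of_nonneg h_nn]
    linarith
  obtain ⟨y, hy⟩ := hcomp x h_cauchy
  refine ⟨y, S.eq_of_tendsto_ae_rnorm_sub_le (by simpa using hy.add hr) ?_⟩
  filter_upwards [h] with j hj
  filter_upwards [S.ae_rnorm_sub_le (T y) (T (x j)) z, hj, hn.ae_le_NinfV (x j - y)]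
    with ω h_tri h_j h_y
  rw [← hT.map_sub, hiso, hn.map_sub_comm] at h_tri
  linarith

lemma exists_dTendsto_sum_of_NinfV_le_geometric [NeZero μ] (hn : IsLinfNorm μ n)
    (hcomp : dComplete (fun x y : E => NinfV μ (n (x - y)))) (v : ℕ → E)
    (hv : ∀ j, NinfV μ (n (v j)) ≤ (1 / 2 : ℝ) ^ j) :
    ∃ Y, dTendsto (fun x y : E => NinfV μ (n (x - y)))
      (fun K => ∑ j ∈ Finset.range K, v j) Y := by
  set r : ℕ → ℝ := fun i => (1 / 2 : ℝ) ^ i / (1 - 1 / 2)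
  have hr : Tendsto r atTop (nhds 0) := by
    simpa [r] using (tendsto_pow_atTop_nhds_zero_of_lt_one (by norm_num : (0 : ℝ) ≤ 1 / 2)
      (by norm_num)).div_const (1 - 1 / 2 : ℝ)
  have h_tail : ∀ i j, i ≤ j →
      NinfV μ (n (∑ k ∈ Finset.range j, v k - ∑ k ∈ Finset.range i, v k)) ≤ r i := by
    intro i j hij
    rw [← Finset.sum_Ico_eq_sub _ hij]
    calc _ ≤ ∑ k ∈ Finset.Ico i j, NinfV μ (n (v k)) := hn.NinfV_sum_le _ _
      _ ≤ ∑ k ∈ Finset.Ico i j, (1 / 2 : ℝ) ^ k := Finset.sum_le_sum fun k _ => hv k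
      _ ≤ r i := geom_sum_Ico_le_of_lt_one (by norm_num) (by norm_num)
  have hr_nonneg : ∀ i, 0 ≤ r i := fun i => by positivity
  refine hcomp _ (dCauchy_of_le_add hr 0 fun i _ j _ => ?_)
  rcases le_total i j with hij | hji
  · rw [hn.map_sub_comm]
    linarith [h_tail i j hij, hr_nonneg j]
  · linarith [h_tail j i hji, hr_nonneg i]

lemma indL0_smul_map_eq_of_dTendsto (hn : IsLinfNorm μ n) (hT : IsLinfModHom μ T)
    (hiso : ∀ x, S.rnorm (T x) = n x) {A : Set Ω} (hA : MeasurableSet A) {s : ℕ → E} {Y : E}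
    (hs : dTendsto (fun x y : E => NinfV μ (n (x - y))) s Y) {w : S.carrier}
    (h : ∀ᶠ K in atTop, indL0 μ A hA • T (s K) = w) : indL0 μ A hA • T Y = w := by
  refine S.eq_of_tendsto_ae_rnorm_sub_le hs ?_
  filter_upwards [h] with K hK
  rw [← hK, ← smul_sub, ← hT.map_sub]
  filter_upwards [S.rnorm_indL0_smul_ae_eq A hA (T (Y - s K)), hn.ae_le_NinfV (s K - Y),
    hn.ae_nonneg (s K - Y)] with ω h_ind h_le h_nn
  rw [h_ind, hiso, hn.map_sub_comm]
  by_cases hω : ω ∈ A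
  · rwa [Set.indicator_of_mem hω]
  · rw [Set.indicator_of_notMem hω]
    exact h_nn.trans h_le

lemma exists_partition_indL0_smul_mem_range [IsProbabilityMeasure μ] (hn : IsLinfNorm μ n)
    (hcomp : dComplete (fun x y : E => NinfV μ (n (x - y)))) (hT : IsLinfModHom μ T)
    (hiso : ∀ x, S.rnorm (T x) = n x) {z : S.carrier}
    (hz : ∀ ε > (0 : ℝ), ∃ x : E, S.dist (T x) z < ε) :
    ∃ (B : ℕ → Set Ω) (hB : ∀ j, MeasurableSet (B j)),
      (Pairwise fun i j => Disjoint (B i) (B j)) ∧ (∀ᵐ ω ∂μ, ∃ j, ω ∈ B j) ∧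
      ∀ j, indL0 μ (B j) (hB j) • z ∈ Set.range T := by
  -- the square makes Markov's inequality at level `2⁻ᵐ` give the summable bound `2⁻ᵐ`
  choose x hx using fun m : ℕ => hz (((1 / 2 : ℝ) ^ m) ^ 2) (by positivity)
  set f : ℕ → Ω →ₘ[μ] ℝ := fun m => S.rnorm (T (x m) - z)
  have h_ae : ∀ᵐ ω ∂μ, ∀ᶠ m in atTop, |f m ω| < (1 / 2 : ℝ) ^ m :=
    ae_eventually_abs_lt_of_integral_min_one_le f (fun m => by positivity)
      (fun m => pow_le_one₀ (by norm_num) (by norm_num)) summable_geometric_two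
      (fun m => (hx m).le)
  obtain ⟨B, hB, hdisj, hcover, hBf⟩ := exists_disjoint_cover_of_ae_eventually
    (fun m => measurableSet_lt (f m).measurable.abs measurable_const) h_ae
  refine ⟨B, hB, hdisj, hcover, fun j => ?_⟩
  refine mem_range_of_tendsto_uniformly hn hcomp hT hiso
    (x := fun m => indLinf μ (B j) (hB j) • x m)
    (tendsto_pow_atTop_nhds_zero_of_lt_one (by norm_num : (0 : ℝ) ≤ 1 / 2) (by norm_num))
    (eventually_atTop.2 ⟨j, fun m hm => ?_⟩)
  rw [hT.2, coe_indLinf, ← smul_sub]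
  filter_upwards [S.rnorm_indL0_smul_ae_eq (B j) (hB j) (T (x m) - z)] with ω h_ind
  rw [h_ind]
  by_cases hω : ω ∈ B j
  · rw [Set.indicator_of_mem hω]
    exact (le_abs_self _).trans (hBf j ω hω m hm).le
  · rw [Set.indicator_of_notMem hω]
    positivity

lemma exists_smul_eq_of_indL0_smul_mem_range [NeZero μ] (hn : IsLinfNorm μ n)
    (hcomp : dComplete (fun x y : E => NinfV μ (n (x - y)))) (hT : IsLinfModHom μ T)
    (hiso : ∀ x, S.rnorm (T x) = n x) {z : S.carrier} {B : ℕ → Set Ω}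
    (hB : ∀ j, MeasurableSet (B j)) (hdisj : Pairwise fun i j => Disjoint (B i) (B j))
    (hcover : ∀ᵐ ω ∂μ, ∃ j, ω ∈ B j) (hz : ∀ j, indL0 μ (B j) (hB j) • z ∈ Set.range T) :
    ∃ (ξ : Ω →ₘ[μ] ℝ) (y : E), z = ξ • T y := by
  choose u hu using hz
  choose c hc_pos hc using fun j =>
    hn.exists_pos_NinfV_LinfConst_smul_le (u j) (by positivity : (0 : ℝ) < (1 / 2) ^ j)
  obtain ⟨Y, hY⟩ := exists_dTendsto_sum_of_NinfV_le_geometric hn hcomp _ hc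
  have h_piece : ∀ j, indL0 μ (B j) (hB j) • T Y =
      (AEEqFun.const Ω (c j) * indL0 μ (B j) (hB j)) • z := by
    intro j
    refine indL0_smul_map_eq_of_dTendsto hn hT hiso (hB j) hY
      (eventually_atTop.2 ⟨j + 1, fun K hK => ?_⟩)
    rw [hT.map_sum, Finset.smul_sum, Finset.sum_eq_single j (fun i _ hij => ?_)
      (fun hj => absurd (Finset.mem_range.2 (by omega)) hj)]
    · rw [hT.2, hu j, smul_smul, smul_smul, coe_LinfConst, mul_right_comm, indL0_mul_self,
        mul_comm]
    · rw [hT.2, hu i, smul_smul, smul_smul, mul_right_comm,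
        indL0_mul_of_disjoint _ _ (hdisj hij.symm), zero_mul, zero_smul]
  refine ⟨piecewiseConstL0 μ B hB fun j => (c j)⁻¹, Y,
    S.eq_of_forall_indL0_smul_eq hB hcover fun j => ?_⟩
  rw [smul_smul, indL0_mul_piecewiseConstL0 hB hdisj, mul_smul, h_piece, smul_smul,
    ← mul_assoc, AEEqFun.const_mul_const, inv_mul_cancel₀ (hc_pos j).ne', AEEqFun.const_one,
    one_mul]

end Extension

/-- if `(E,‖·‖)` is a complete `L^∞`-normed module, then every element
of its `L⁰`-extension `E₀` is of the form `ξ • y` with `ξ ∈ L⁰` and `y ∈ E`;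
that is, `E₀ = L⁰ * E`. -/
theorem L0_extension_eq_L0_smul_of_complete
    {Ω : Type} [MeasurableSpace Ω] (μ : Measure Ω) [IsProbabilityMeasure μ]
    {E : Type} [AddCommGroup E] [Module (Linf μ) E]
    (n : E → Ω →ₘ[μ] ℝ) (hn : IsLinfNorm μ n)
    (hcomp : dComplete (fun x y : E => NinfV μ (n (x - y))))
    (S : RNMod Ω μ) (T : E → S.carrier) (hext : IsL0Extension μ n S T) :
    ∀ z : S.carrier, ∃ (ξ : Ω →ₘ[μ] ℝ) (y : E), z = ξ • T y := by
  obtain ⟨-, hT, hiso, hdense⟩ := hext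
  intro z
  obtain ⟨B, hB, hdisj, hcover, hBz⟩ :=
    exists_partition_indL0_smul_mem_range hn hcomp hT hiso (hdense z)
  exact exists_smul_eq_of_indL0_smul_mem_range hn hcomp hT hiso hB hdisj hcover hBz

end
end

section
/- Let Ω = ℕ with P({k}) = 2^{-k} and E = {φ : Ω → ℝ : φ(k)=0 for all large k} ⊂ L^∞. Then the L^0-submodule L^0 * E of L^0 generated by E equals E itself, while the countable concatenation hull H^0_cc(E) equals L^0. In particular L(E) = E is a proper subset of H^0_cc(E) = L^0. -/
open MeasureTheory Filter
noncomputable section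

variable {Ω : Type} [MeasurableSpace Ω] {μ : Measure Ω}

/-- the set of classes of finitely supported functions in `L⁰(ℕ)`. -/
def FinSupp (μ : Measure ℕ) : Set (ℕ →ₘ[μ] ℝ) :=
  {φ | ∃ f : ℕ → ℝ, (∃ N : ℕ, ∀ k ≥ N, f k = 0) ∧
    φ = AEEqFun.mk f measurable_from_top.aestronglyMeasurable}

def MPartition.singletons : MPartition ℕ where
  A k := {k}
  meas := measurableSet_singleton
  disj _ _ hmk := Set.singleton_inter_eq_empty.2 hmk
  cover := Set.iUnion_of_singleton ℕ

section FinSupp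

variable {μ : Measure ℕ}

lemma mul_mem_finSupp (ξ : ℕ →ₘ[μ] ℝ) {φ : ℕ →ₘ[μ] ℝ} (hφ : φ ∈ FinSupp μ) :
    ξ * φ ∈ FinSupp μ := by
  obtain ⟨f, ⟨N, hN⟩, rfl⟩ := hφ
  refine ⟨ξ * f, ⟨N, fun k hk => by simp [hN k hk]⟩, ?_⟩
  conv_lhs => rw [← AEEqFun.mk_coeFn ξ]
  exact AEEqFun.mk_mul_mk _ _ _ _

lemma indL0_singleton_mem_finSupp (k : ℕ) :
    indL0 μ {k} (measurableSet_singleton k) ∈ FinSupp μ :=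
  ⟨_, ⟨k + 1, fun _ hn => Set.indicator_of_notMem (by simp; omega) _⟩, rfl⟩

lemma mul_finSupp_eq_finSupp :
    {z : ℕ →ₘ[μ] ℝ | ∃ ξ : ℕ →ₘ[μ] ℝ, ∃ φ ∈ FinSupp μ, z = ξ * φ} = FinSupp μ :=
  Set.Subset.antisymm (by rintro _ ⟨ξ, φ, hφ, rfl⟩; exact mul_mem_finSupp ξ hφ)
    fun φ hφ => ⟨1, φ, hφ, (one_mul φ).symm⟩

lemma concatenationHull_finSupp_eq_univ :
    {z : ℕ →ₘ[μ] ℝ | ∃ (x : ℕ → ℕ →ₘ[μ] ℝ) (P : MPartition ℕ),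
      (∀ k, x k ∈ FinSupp μ) ∧ ∀ k, P.ind μ k * z = P.ind μ k * x k} = Set.univ :=
  Set.eq_univ_of_forall fun z =>
    ⟨fun k => MPartition.singletons.ind μ k * z, MPartition.singletons,
      fun k => by dsimp only; rw [mul_comm]; exact mul_mem_finSupp z (indL0_singleton_mem_finSupp k),
      fun k => by rw [← mul_assoc, MPartition.ind, indL0_mul_self]⟩

lemma one_notMem_finSupp (hμ : ∀ k, μ {k} ≠ 0) : (1 : ℕ →ₘ[μ] ℝ) ∉ FinSupp μ := by
  rintro ⟨f, ⟨N, hN⟩, hf⟩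
  rw [AEEqFun.one_def, AEEqFun.mk_eq_mk, EventuallyEq, ae_eq_top.2 hμ, eventually_top] at hf
  simpa [hN N le_rfl] using hf N

end FinSupp

theorem Lgen_eq_self_and_Hcc_eq_univ_general
    (μ : Measure ℕ)
    (hμ : ∀ k : ℕ, μ {k} = ENNReal.ofReal ((1:ℝ) / 2 ^ (k + 1))) :
    {z : ℕ →ₘ[μ] ℝ | ∃ ξ : ℕ →ₘ[μ] ℝ, ∃ φ ∈ FinSupp μ, z = ξ * φ} = FinSupp μ ∧
    {z : ℕ →ₘ[μ] ℝ | ∃ (x : ℕ → ℕ →ₘ[μ] ℝ) (P : MPartition ℕ),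
      (∀ k, x k ∈ FinSupp μ) ∧ ∀ k, P.ind μ k * z = P.ind μ k * x k} = Set.univ ∧
    FinSupp μ ≠ (Set.univ : Set (ℕ →ₘ[μ] ℝ)) := by
  have hμ_pos : ∀ k : ℕ, μ {k} ≠ 0 := fun k => by simp [hμ]
  exact ⟨mul_finSupp_eq_finSupp, concatenationHull_finSupp_eq_univ,
    fun h => one_notMem_finSupp hμ_pos (h ▸ Set.mem_univ 1)⟩

/-- on `Ω = ℕ` with `P({k}) = 2^{-(k+1)}` and `E` the finitely
supported sequences, `L(E) = L⁰ * E = E` while `H⁰_cc(E) = L⁰`; in particular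
`L(E) = E` is a proper subset of `H⁰_cc(E) = L⁰`. -/
theorem Lgen_eq_self_and_Hcc_eq_univ
    (μ : Measure ℕ) [IsProbabilityMeasure μ]
    (hμ : ∀ k : ℕ, μ {k} = ENNReal.ofReal ((1:ℝ) / 2 ^ (k + 1))) :
    {z : ℕ →ₘ[μ] ℝ | ∃ ξ : ℕ →ₘ[μ] ℝ, ∃ φ ∈ FinSupp μ, z = ξ * φ} = FinSupp μ ∧
    {z : ℕ →ₘ[μ] ℝ | ∃ (x : ℕ → ℕ →ₘ[μ] ℝ) (P : MPartition ℕ),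
      (∀ k, x k ∈ FinSupp μ) ∧ ∀ k, P.ind μ k * z = P.ind μ k * x k} = Set.univ ∧
    FinSupp μ ≠ (Set.univ : Set (ℕ →ₘ[μ] ℝ)) :=
  Lgen_eq_self_and_Hcc_eq_univ_general μ hμ

end
end

section
/- Let (E, ‖·‖) be an L^∞-normed module and E′ its dual L^∞-normed module. For any sequence {f_n} in the unit ball U(E′) and any countable measurable partition {A_n} of Ω, the map f : E → L^∞ defined by f(x) = Σ_n Ĩ_{A_n} f_n(x) is a well-defined element of U(E′). Hence U(E′) has the countable concatenation property. -/
open MeasureTheory Filter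
noncomputable section

variable {Ω : Type} [MeasurableSpace Ω] {μ : Measure Ω}

/-!
On each `A_k` the concatenation `f` agrees with `f_k`, so additivity, `L^∞`-homogeneity and the
unit-ball bound pass from the `f_k` to `f` pointwise. Continuity needs a bound uniform in `k`:
scaling `x` by the constant `c⁻¹` shows that `‖x‖ ≤ c` forces `|f_k(x)| ≤ c` for every `k`, hence
`|f(x)| ≤ c`. Taking `c` slightly above `‖‖x‖‖_∞` gives `f(x) ∈ L^∞` and
`‖f(x)‖_∞ ≤ ‖‖x‖‖_∞`, which is the required continuity.
-/

namespace MPartition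

variable (P : MPartition Ω)

theorem exists_mem (ω : Ω) : ∃ k, ω ∈ P.A k :=
  Set.mem_iUnion.1 (P.cover ▸ Set.mem_univ ω)

open Classical in
def index (ω : Ω) : ℕ := Nat.find (P.exists_mem ω)

theorem mem_index (ω : Ω) : ω ∈ P.A (P.index ω) := by
  classical exact Nat.find_spec (P.exists_mem ω)

theorem index_eq_of_mem {k : ℕ} {ω : Ω} (h : ω ∈ P.A k) : P.index ω = k := by
  by_contra hne
  have hω : ω ∈ P.A (P.index ω) ∩ P.A k := ⟨P.mem_index ω, h⟩
  rw [P.disj _ _ hne] at hω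
  exact hω

theorem measurable_apply_index (ξ : ℕ → Ω →ₘ[μ] ℝ) : Measurable fun ω => ξ (P.index ω) ω := by
  classical
  exact Measurable.find (p := fun k ω => ω ∈ P.A k) (fun k => (ξ k).measurable) P.meas P.exists_mem

/-- `Σ_k Ĩ_{A_k} ξ_k` in the notation of the paper. -/
def concat (ξ : ℕ → Ω →ₘ[μ] ℝ) : Ω →ₘ[μ] ℝ :=
  AEEqFun.mk _ (P.measurable_apply_index ξ).aestronglyMeasurable

theorem coeFn_concat (ξ : ℕ → Ω →ₘ[μ] ℝ) :
    ⇑(P.concat ξ) =ᵐ[μ] fun ω => ξ (P.index ω) ω :=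
  AEEqFun.coeFn_mk _ _

theorem coeFn_ind (k : ℕ) : ⇑(P.ind μ k) =ᵐ[μ] (P.A k).indicator 1 :=
  AEEqFun.coeFn_mk _ _

theorem ind_mul_concat (ξ : ℕ → Ω →ₘ[μ] ℝ) (k : ℕ) :
    P.ind μ k * P.concat ξ = P.ind μ k * ξ k := by
  refine AEEqFun.ext ?_
  filter_upwards [AEEqFun.coeFn_mul (P.ind μ k) (P.concat ξ), AEEqFun.coeFn_mul (P.ind μ k) (ξ k),
    P.coeFn_ind k, P.coeFn_concat ξ] with ω hmul hmul' hind hconcat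
  rw [hmul, hmul', Pi.mul_apply, Pi.mul_apply, hind, hconcat]
  by_cases hω : ω ∈ P.A k
  · rw [P.index_eq_of_mem hω]
  · simp [hω]

theorem concat_add (ξ η : ℕ → Ω →ₘ[μ] ℝ) :
    P.concat (fun k => ξ k + η k) = P.concat ξ + P.concat η := by
  refine AEEqFun.ext ?_
  filter_upwards [P.coeFn_concat (fun k => ξ k + η k), P.coeFn_concat ξ, P.coeFn_concat η,
    AEEqFun.coeFn_add (P.concat ξ) (P.concat η),
    ae_all_iff.2 fun k => AEEqFun.coeFn_add (ξ k) (η k)] with ω h h₁ h₂ hadd hadd'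
  rw [h, hadd, Pi.add_apply, h₁, h₂, hadd', Pi.add_apply]

theorem concat_mul_left (a : Ω →ₘ[μ] ℝ) (ξ : ℕ → Ω →ₘ[μ] ℝ) :
    P.concat (fun k => a * ξ k) = a * P.concat ξ := by
  refine AEEqFun.ext ?_
  filter_upwards [P.coeFn_concat (fun k => a * ξ k), P.coeFn_concat ξ,
    AEEqFun.coeFn_mul a (P.concat ξ),
    ae_all_iff.2 fun k => AEEqFun.coeFn_mul a (ξ k)] with ω h h₁ hmul hmul'
  rw [h, hmul, Pi.mul_apply, h₁, hmul', Pi.mul_apply]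

theorem abs_concat_le {ξ : ℕ → Ω →ₘ[μ] ℝ} {η : Ω →ₘ[μ] ℝ} (h : ∀ k, |ξ k| ≤ η) :
    |P.concat ξ| ≤ η := by
  rw [← AEEqFun.coeFn_le]
  filter_upwards [AEEqFun.coeFn_abs (P.concat ξ), P.coeFn_concat ξ,
    ae_all_iff.2 fun k => AEEqFun.coeFn_abs (ξ k),
    ae_all_iff.2 fun k => AEEqFun.coeFn_le.2 (h k)] with ω habs hconcat habs' hle
  rw [habs, hconcat, ← habs']
  exact hle _

end MPartition

namespace MeasureTheory.AEEqFun

theorem le_const_iff {ξ : Ω →ₘ[μ] ℝ} {c : ℝ} :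
    ξ ≤ AEEqFun.const Ω c ↔ ∀ᵐ ω ∂μ, ξ ω ≤ c := by
  rw [← coeFn_le]
  refine eventually_congr ?_
  filter_upwards [coeFn_const (α := Ω) (μ := μ) c] with ω h
  rw [h, Function.const_apply]

theorem abs_le_const_iff {ξ : Ω →ₘ[μ] ℝ} {c : ℝ} :
    |ξ| ≤ AEEqFun.const Ω c ↔ ∀ᵐ ω ∂μ, |ξ ω| ≤ c := by
  rw [le_const_iff]
  refine eventually_congr ?_
  filter_upwards [coeFn_abs ξ] with ω h
  rw [h]

end MeasureTheory.AEEqFun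

theorem mem_Linf_of_abs_le_const {ξ : Ω →ₘ[μ] ℝ} {c : ℝ} (h : |ξ| ≤ AEEqFun.const Ω c) :
    ξ ∈ Linf μ :=
  ⟨c, AEEqFun.abs_le_const_iff.1 h⟩

theorem le_const_of_NinfV_le {ξ : Ω →ₘ[μ] ℝ} (hξ : ξ ∈ Linf μ) {c : ℝ} (hc : NinfV μ ξ ≤ c) :
    ξ ≤ AEEqFun.const Ω c := by
  obtain ⟨b, hb⟩ := hξ
  rw [AEEqFun.le_const_iff]
  filter_upwards [ae_le_essSup ⟨b, eventually_map.2 hb⟩] with ω h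
  exact (le_abs_self _).trans (h.trans hc)

theorem NinfV_le_of_abs_le_const {ξ : Ω →ₘ[μ] ℝ} {c : ℝ} (hc : 0 ≤ c)
    (h : |ξ| ≤ AEEqFun.const Ω c) : NinfV μ ξ ≤ c := by
  rcases eq_zero_or_neZero μ with rfl | _
  · simp [NinfV, essSup, Filter.limsup, Filter.limsSup, hc]
  · exact essSup_le_of_ae_le c (AEEqFun.abs_le_const_iff.1 h)
      (isCoboundedUnder_le_of_le _ fun ω => abs_nonneg _)

section LinfDual

variable {E : Type} [AddCommGroup E] [Module (Linf μ) E] {n : E → Ω →ₘ[μ] ℝ}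

theorem isLinfDual_of_abs_le_const (hn : ∀ x, n x ∈ Linf μ) {g : E → Ω →ₘ[μ] ℝ}
    (hadd : ∀ x y, g (x + y) = g x + g y)
    (hsmul : ∀ (ξ : Linf μ) (x : E), g (ξ • x) = (ξ : Ω →ₘ[μ] ℝ) * g x)
    (hbdd : ∀ (x : E) (c : ℝ), 0 < c → n x ≤ AEEqFun.const Ω c → |g x| ≤ AEEqFun.const Ω c) :
    IsLinfDual μ n g := by
  refine ⟨fun x => ?_, hadd, hsmul, fun ε hε => ⟨ε, hε, fun x hx => ?_⟩⟩
  · exact mem_Linf_of_abs_le_const <| hbdd x _ (lt_max_of_lt_right one_pos)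
      (le_const_of_NinfV_le (hn x) (le_max_left _ 1))
  · have hC : 0 < max (NinfV μ (n x)) (ε / 2) := lt_max_of_lt_right (half_pos hε)
    calc NinfV μ (g x) ≤ max (NinfV μ (n x)) (ε / 2) :=
          NinfV_le_of_abs_le_const hC.le <| hbdd x _ hC
            (le_const_of_NinfV_le (hn x) (le_max_left _ _))
      _ < ε := max_lt hx (half_lt_self hε)

theorem IsLinfDual.abs_le_const_of_le_const {f : E → Ω →ₘ[μ] ℝ} (hf : IsLinfDual μ n f)
    (hn : IsLinfNorm μ n) (hball : ∀ x : E, n x ≤ 1 → |f x| ≤ 1) {c : ℝ} (hc : 0 < c) {x : E}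
    (hx : n x ≤ AEEqFun.const Ω c) : |f x| ≤ AEEqFun.const Ω c := by
  have hcoe : (LinfConst μ c⁻¹ : Ω →ₘ[μ] ℝ) = AEEqFun.const Ω c⁻¹ := rfl
  have hconst := AEEqFun.coeFn_const (α := Ω) (μ := μ) c⁻¹
  have hscaled : n (LinfConst μ c⁻¹ • x) ≤ 1 := by
    rw [hn.norm_smul, AEEqFun.one_def, ← AEEqFun.const, AEEqFun.le_const_iff]
    filter_upwards [AEEqFun.coeFn_mul |AEEqFun.const Ω c⁻¹| (n x),
      AEEqFun.coeFn_abs (AEEqFun.const Ω c⁻¹ : Ω →ₘ[μ] ℝ), hconst,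
      AEEqFun.le_const_iff.1 hx] with ω hmul habs hconstω hle
    rw [hcoe, hmul, Pi.mul_apply, habs, hconstω, Function.const_apply, abs_of_pos (inv_pos.2 hc),
      inv_mul_le_iff₀ hc, mul_one]
    exact hle
  have hbound := hball _ hscaled
  rw [hf.2.2.1, AEEqFun.one_def, ← AEEqFun.const, AEEqFun.abs_le_const_iff] at hbound
  rw [AEEqFun.abs_le_const_iff]
  filter_upwards [hbound, AEEqFun.coeFn_mul (AEEqFun.const Ω c⁻¹ : Ω →ₘ[μ] ℝ) (f x),
    hconst] with ω hle hmul hconstω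
  rwa [hcoe, hmul, Pi.mul_apply, hconstω, Function.const_apply, abs_mul, abs_of_pos (inv_pos.2 hc),
    inv_mul_le_iff₀ hc, mul_one] at hle

end LinfDual

theorem dual_unit_ball_ccp_general
    {Ω : Type} [MeasurableSpace Ω] (μ : Measure Ω)
    {E : Type} [AddCommGroup E] [Module (Linf μ) E]
    (n : E → Ω →ₘ[μ] ℝ) (hn : IsLinfNorm μ n)
    (f : ℕ → E → Ω →ₘ[μ] ℝ) (hf : ∀ k, IsLinfDual μ n (f k))
    (hball : ∀ k, ∀ x : E, n x ≤ 1 → |f k x| ≤ 1)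
    (P : MPartition Ω) :
    ∃ g : E → Ω →ₘ[μ] ℝ,
      (∀ (x : E) (k : ℕ), P.ind μ k * g x = P.ind μ k * f k x) ∧
      IsLinfDual μ n g ∧
      (∀ x : E, n x ≤ 1 → |g x| ≤ 1) := by
  set g : E → Ω →ₘ[μ] ℝ := fun x => P.concat fun k => f k x
  have hadd : ∀ x y, g (x + y) = g x + g y := fun x y =>
    (congrArg P.concat (funext fun k => (hf k).2.1 x y)).trans (P.concat_add _ _)
  have hsmul : ∀ (ξ : Linf μ) x, g (ξ • x) = (ξ : Ω →ₘ[μ] ℝ) * g x := fun ξ x =>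
    (congrArg P.concat (funext fun k => (hf k).2.2.1 ξ x)).trans (P.concat_mul_left _ _)
  have hbdd : ∀ x (c : ℝ), 0 < c → n x ≤ AEEqFun.const Ω c → |g x| ≤ AEEqFun.const Ω c :=
    fun x c hc hx => P.abs_concat_le fun k => (hf k).abs_le_const_of_le_const hn (hball k) hc hx
  exact ⟨g, fun x k => P.ind_mul_concat _ k,
    isLinfDual_of_abs_le_const hn.mem_Linf hadd hsmul hbdd,
    fun x hx => P.abs_concat_le fun k => hball k x hx⟩

/-- the unit ball of the dual `E′` of an `L^∞`-normed module has the
countable concatenation property: for `{f_n} ⊆ U(E′)` and a countable measurable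
partition `{A_n}`, the concatenation `f(x) = Σ_n Ĩ_{A_n} f_n(x)` is a well-defined
element of `U(E′)`. -/
theorem dual_unit_ball_ccp
    {Ω : Type} [MeasurableSpace Ω] (μ : Measure Ω) [IsProbabilityMeasure μ]
    {E : Type} [AddCommGroup E] [Module (Linf μ) E]
    (n : E → Ω →ₘ[μ] ℝ) (hn : IsLinfNorm μ n)
    (f : ℕ → E → Ω →ₘ[μ] ℝ) (hf : ∀ k, IsLinfDual μ n (f k))
    (hball : ∀ k, ∀ x : E, n x ≤ 1 → |f k x| ≤ 1)
    (P : MPartition Ω) :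
    ∃ g : E → Ω →ₘ[μ] ℝ,
      (∀ (x : E) (k : ℕ), P.ind μ k * g x = P.ind μ k * f k x) ∧
      IsLinfDual μ n g ∧
      (∀ x : E, n x ≤ 1 → |g x| ≤ 1) :=
  dual_unit_ball_ccp_general μ n hn f hf hball P

end
end
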